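/- Let F be a field and G, F₀ ∈ M_{m×n}(F). There exists a square-zero matrix H ∈ M_m(F) with G = H·F₀ if and only if N(F₀) ⊆ N(G) and R(G) ∩ R(F₀) ⊆ F₀(N(G)), where F₀(N(G)) denotes the image of the kernel of G under the linear map v ↦ F₀v. -/

import Mathlib

/-!
Work with linear maps `f = F₀` and `g = G`. Given the two kernel/range conditions, the map
`(v, u) ↦ g v` kills the kernel of `(v, u) ↦ f v + g u`, so it factors through the latter as a map
`h` with values in `range g`. Then `h ∘ f = g`, `h` vanishes on `range g`, and since `h` takes
values in `range g`, `h ∘ h = 0`. Conversely, if `g = h ∘ f` with `h² = 0`, an element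
`g u = f w` of `range g ⊓ range f` satisfies `g w = h (g u) = h (h (f u)) = 0`.
-/

namespace LinearMap

variable {K V W U : Type*} [DivisionRing K] [AddCommGroup V] [Module K V]
  [AddCommGroup W] [Module K W] [AddCommGroup U] [Module K U]

theorem exists_comp_eq_of_ker_le {f : V →ₗ[K] W} {g : V →ₗ[K] U} (hfg : ker f ≤ ker g) :
    ∃ h : W →ₗ[K] U, h ∘ₗ f = g := by
  obtain ⟨h, hh⟩ := exists_extend ((ker f).liftQ g hfg ∘ₗ f.quotKerEquivRange.symm.toLinearMap)
  refine ⟨h, ext fun v => ?_⟩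
  simpa [quotKerEquivRange_symm_apply_image] using congr($hh ⟨f v, mem_range_self f v⟩)

theorem exists_comp_self_eq_zero_and_eq_comp_iff (f g : V →ₗ[K] W) :
    (∃ h : W →ₗ[K] W, h ∘ₗ h = 0 ∧ g = h ∘ₗ f) ↔
      ker f ≤ ker g ∧ range g ⊓ range f ≤ (ker g).map f := by
  constructor
  · rintro ⟨h, hh, rfl⟩
    refine ⟨ker_le_ker_comp f h, ?_⟩
    rintro _ ⟨⟨u, rfl⟩, ⟨w, hw⟩⟩
    refine ⟨w, ?_, hw⟩
    change h (f w) = 0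
    rw [hw]
    exact congr($hh (f u))
  · rintro ⟨hker, hint⟩
    have hker_coprod : ker (f.coprod g) ≤ ker (g.rangeRestrict ∘ₗ fst K V V) := by
      rintro ⟨v, u⟩ hvu
      -- `f v = g (-u)` lies in `range g ⊓ range f`, so `f v = f w` with `g w = 0`
      obtain ⟨w, hw, hwv⟩ := hint ⟨⟨-u, by simpa [neg_eq_iff_add_eq_zero, add_comm] using hvu⟩,
        mem_range_self f v⟩
      have hgv : g v = 0 := by
        have hvw : g (v - w) = 0 := hker (by simp [hwv])
        rwa [map_sub, mem_ker.mp hw, sub_zero] at hvw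
      simpa [Subtype.ext_iff] using hgv
    obtain ⟨h, hh⟩ := exists_comp_eq_of_ker_le hker_coprod
    have hf : ∀ v, (h (f v) : W) = g v := fun v => by simpa using congr(($hh (v, 0) : W))
    have hg : ∀ u, h (g u) = 0 := fun u => by simpa using congr(($hh (0, u) : W))
    refine ⟨(range g).subtype ∘ₗ h, ext fun x => ?_, ext fun v => by simp [hf]⟩
    obtain ⟨u, hu⟩ := (h x).2
    simp [← hu, hg]

end LinearMap

/-- Botha, Theorem 1. Let `F` be a field and `G, F₀ ∈ M_{m×n}(F)`. There is
a square-zero matrix `H ∈ M_m(F)` with `G = H * F₀` if and only if `ker F₀ ⊆ ker G` and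
`range G ∩ range F₀ ⊆ F₀(ker G)`. -/
theorem stmt7 {m n : ℕ} {F : Type*} [Field F]
    (G F₀ : Matrix (Fin m) (Fin n) F) :
    (∃ H : Matrix (Fin m) (Fin m) F, H * H = 0 ∧ G = H * F₀) ↔
      (LinearMap.ker F₀.mulVecLin ≤ LinearMap.ker G.mulVecLin ∧
       LinearMap.range G.mulVecLin ⊓ LinearMap.range F₀.mulVecLin ≤
         Submodule.map F₀.mulVecLin (LinearMap.ker G.mulVecLin)) := by
  rw [← LinearMap.exists_comp_self_eq_zero_and_eq_comp_iff, Matrix.toLin'.surjective.exists]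
  simp only [← Matrix.toLin'_apply', ← Matrix.toLin'_mul, ← map_zero Matrix.toLin',
    Matrix.toLin'.injective.eq_iff]
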